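/- arXiv:2508.13346 — 2 statements merged into one kernel-verified Lean document; each statement's English description precedes it below -/
import Mathlib

section
/- Let H be a real Hilbert space, let (Ω, F, ℙ) be a probability space, and let W : Ω → {subspaces of H} be a random finite-dimensional subspace of H such that ω ↦ dim(W(ω)) and, for each i, ω ↦ inf_{g ∈ W(ω)} ‖g − φ_i‖² are measurable and integrable. Let φ₁, …, φ_N ∈ H satisfy ‖φ_i‖² = 1 for all i, let r := E[dim(W)] < ∞, and define ε := (1/N) · Σ_{i=1}^N E[ inf_{g ∈ W} ‖g − φ_i‖² ]. Then r ≥ N · (1 − ε) / (1 + √(Σ_{i ≠ j} ⟨φ_i, φ_j⟩²)). -/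
/-!
For unit vectors the Gram matrix is `I + A` with `A` vanishing on the diagonal, so by
Cauchy–Schwarz its quadratic form is at most `(1 + ‖A‖_F) ‖c‖²`; dually
`∑ i, ⟪φ i, e⟫² ≤ 1 + ‖A‖_F` for every unit vector `e`. Summing over an orthonormal basis of a
finite-dimensional subspace `K` bounds `∑ i, (1 - dist(φ i, K)²) = ∑ i, ‖P_K φ i‖²` by
`dim K · (1 + ‖A‖_F)`; taking expectations over the random subspace gives the theorem.
-/

open Finset MeasureTheory
open scoped RealInnerProductSpace

lemma iInf_norm_sub_sq_eq {E : Type*} [NormedAddCommGroup E] [InnerProductSpace ℝ E]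
    (K : Submodule ℝ E) [K.HasOrthogonalProjection] (u : E) :
    ⨅ g : K, ‖(g : E) - u‖ ^ 2 = ‖u‖ ^ 2 - ‖K.starProjection u‖ ^ 2 := by
  have hbdd : BddBelow (Set.range fun g : K => ‖(g : E) - u‖ ^ 2) :=
    ⟨0, by rintro _ ⟨g, rfl⟩; positivity⟩
  have hmin : ⨅ g : K, ‖(g : E) - u‖ ^ 2 = ‖u - K.starProjection u‖ ^ 2 := by
    refine le_antisymm ?_ (le_ciInf fun g => ?_)
    · simpa [norm_sub_rev] using ciInf_le hbdd (K.orthogonalProjectionOnto u)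
    · have hle : ‖u - K.starProjection u‖ ≤ ‖u - g‖ := by
        rw [K.starProjection_minimal]
        exact ciInf_le ⟨0, by rintro _ ⟨g, rfl⟩; positivity⟩ g
      rw [norm_sub_rev (g : E)]
      gcongr
  rw [hmin, K.norm_sq_eq_add_norm_sq_starProjection u, K.starProjection_orthogonal_val]
  ring

section GramBound

variable {ι H : Type*} [Fintype ι] [DecidableEq ι] [NormedAddCommGroup H] [InnerProductSpace ℝ H]
  {φ : ι → H}

variable (φ) in
def offDiagInnerSqSum : ℝ :=
  ∑ p ∈ (univ : Finset (ι × ι)).filter (fun p => p.1 ≠ p.2), ⟪φ p.1, φ p.2⟫ ^ 2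

lemma norm_sum_smul_sq_le (hφ : ∀ i, ‖φ i‖ ^ 2 = 1) (c : ι → ℝ) :
    ‖∑ i, c i • φ i‖ ^ 2 ≤ (∑ i, c i ^ 2) * (1 + √(offDiagInnerSqSum φ)) := by
  set A : ι × ι → ℝ := fun p => if p.1 = p.2 then 0 else ⟪φ p.1, φ p.2⟫
  have hgram : ∀ i j, ⟪φ i, φ j⟫ = (if i = j then 1 else 0) + A (i, j) := fun i j => by
    by_cases h : i = j
    · simp [A, h, hφ]
    · simp [A, h]
  have hexpand : ‖∑ i, c i • φ i‖ ^ 2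
      = ∑ i, c i ^ 2 + ∑ p : ι × ι, (c p.1 * c p.2) * A p := by
    rw [← real_inner_self_eq_norm_sq, Fintype.sum_prod_type, sum_inner]
    simp_rw [inner_sum, real_inner_smul_left, real_inner_smul_right, hgram, mul_add, mul_ite,
      mul_one, mul_zero, sum_add_distrib, sum_ite_eq, if_pos (mem_univ _)]
    simp only [sq, mul_assoc]
  have hcs := Real.sum_mul_le_sqrt_mul_sqrt univ (fun p : ι × ι => c p.1 * c p.2) A
  have hc : ∑ p : ι × ι, (c p.1 * c p.2) ^ 2 = (∑ i, c i ^ 2) ^ 2 := by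
    rw [Fintype.sum_prod_type, sq (∑ i, c i ^ 2), sum_mul_sum]
    simp only [mul_pow]
  have hA : ∑ p : ι × ι, A p ^ 2 = offDiagInnerSqSum φ := by
    rw [offDiagInnerSqSum, Finset.sum_filter]
    exact Finset.sum_congr rfl fun p _ => by by_cases h : p.1 = p.2 <;> simp [A, h]
  rw [hc, hA, Real.sqrt_sq (by positivity)] at hcs
  rw [hexpand]
  linarith

lemma sum_inner_sq_le (hφ : ∀ i, ‖φ i‖ ^ 2 = 1) (e : H) :
    ∑ i, ⟪φ i, e⟫ ^ 2 ≤ (1 + √(offDiagInnerSqSum φ)) * ‖e‖ ^ 2 := by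
  set x := ∑ i, ⟪φ i, e⟫ ^ 2
  set v := ∑ i, ⟪φ i, e⟫ • φ i
  have hve : ⟪v, e⟫ = x := by simp only [v, x, sum_inner, real_inner_smul_left, sq]
  have hx : x ^ 2 ≤ ‖v‖ ^ 2 * ‖e‖ ^ 2 := by
    rw [← hve, ← mul_pow]
    exact sq_le_sq' (neg_le_of_abs_le (abs_real_inner_le_norm v e)) (real_inner_le_norm v e)
  have hv : ‖v‖ ^ 2 ≤ x * (1 + √(offDiagInnerSqSum φ)) := norm_sum_smul_sq_le hφ _
  set B := (1 + √(offDiagInnerSqSum φ)) * ‖e‖ ^ 2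
  have hxB : x * x ≤ x * B := by
    calc x * x = x ^ 2 := (sq x).symm
      _ ≤ ‖v‖ ^ 2 * ‖e‖ ^ 2 := hx
      _ ≤ x * B := by simpa only [B, mul_assoc] using mul_le_mul_of_nonneg_right hv (sq_nonneg ‖e‖)
  rcases (show 0 ≤ x by positivity).eq_or_lt with hx0 | hx0
  · rw [← hx0]; positivity
  · exact le_of_mul_le_mul_left hxB hx0

lemma sum_norm_starProjection_sq_le (hφ : ∀ i, ‖φ i‖ ^ 2 = 1)
    (K : Submodule ℝ H) [FiniteDimensional ℝ K] :
    ∑ i, ‖K.starProjection (φ i)‖ ^ 2 ≤ Module.finrank ℝ K * (1 + √(offDiagInnerSqSum φ)) := by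
  set b := stdOrthonormalBasis ℝ K
  have hparseval : ∀ u, ‖K.starProjection u‖ ^ 2 = ∑ m, ⟪u, (b m : H)⟫ ^ 2 := fun u => by
    rw [K.starProjection_apply, Submodule.norm_coe, ← b.sum_sq_inner_right]
    simp only [Submodule.inner_orthogonalProjectionOnto_eq_of_mem_left, real_inner_comm]
  calc ∑ i, ‖K.starProjection (φ i)‖ ^ 2 = ∑ m, ∑ i, ⟪φ i, (b m : H)⟫ ^ 2 := by
        simp only [hparseval]; exact sum_comm
    _ ≤ ∑ m, (1 + √(offDiagInnerSqSum φ)) := by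
        gcongr with m
        simpa [Submodule.norm_coe, b.orthonormal.1 m] using sum_inner_sq_le hφ (b m : H)
    _ = _ := by rw [sum_const, card_univ, Fintype.card_fin, nsmul_eq_mul]

lemma sum_one_sub_iInf_norm_sub_sq_le (hφ : ∀ i, ‖φ i‖ ^ 2 = 1)
    (K : Submodule ℝ H) [FiniteDimensional ℝ K] :
    ∑ i, (1 - ⨅ g : K, ‖(g : H) - φ i‖ ^ 2) ≤
      Module.finrank ℝ K * (1 + √(offDiagInnerSqSum φ)) := by
  simp_rw [iInf_norm_sub_sq_eq, hφ, sub_sub_cancel]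
  exact sum_norm_starProjection_sq_le hφ K

end GramBound

theorem dimension_lower_bound_random_general
    {H : Type*} [NormedAddCommGroup H] [InnerProductSpace ℝ H]
    {Ω : Type*} [MeasurableSpace Ω] (μ : Measure Ω) [IsProbabilityMeasure μ]
    (N : ℕ) (φ : Fin N → H) (hφ : ∀ i, ‖φ i‖ ^ 2 = 1)
    (W : Ω → Submodule ℝ H) (hWfin : ∀ ω, FiniteDimensional ℝ (W ω))
    (hdim : Integrable (fun ω => (Module.finrank ℝ (W ω) : ℝ)) μ)
    (hinf : ∀ i, Integrable (fun ω => ⨅ g : W ω, ‖(g : H) - φ i‖ ^ 2) μ)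
    (r : ℝ) (hr : r = ∫ ω, (Module.finrank ℝ (W ω) : ℝ) ∂μ)
    (ε : ℝ)
    (hε : ε = (1 / (N : ℝ)) * ∑ i, ∫ ω, (⨅ g : W ω, ‖(g : H) - φ i‖ ^ 2) ∂μ) :
    r ≥ (N : ℝ) * (1 - ε) /
      (1 + Real.sqrt (∑ p ∈ (univ : Finset (Fin N × Fin N)).filter (fun p => p.1 ≠ p.2),
        ⟪φ p.1, φ p.2⟫ ^ 2)) := by
  set S := ∑ p ∈ (univ : Finset (Fin N × Fin N)).filter (fun p => p.1 ≠ p.2), ⟪φ p.1, φ p.2⟫ ^ 2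
  set d : Fin N → Ω → ℝ := fun i ω => ⨅ g : W ω, ‖(g : H) - φ i‖ ^ 2
  have hpointwise : ∀ ω, ∑ i, (1 - d i ω) ≤ Module.finrank ℝ (W ω) * (1 + √S) := fun ω =>
    have := hWfin ω
    sum_one_sub_iInf_norm_sub_sq_le hφ (W ω)
  have hmean : (N : ℝ) - ∑ i, ∫ ω, d i ω ∂μ ≤ r * (1 + √S) := by
    have hint : ∀ i, Integrable (fun ω => 1 - d i ω) μ := fun i => (integrable_const 1).sub (hinf i)
    have hterm : ∀ i, ∫ ω, (1 - d i ω) ∂μ = 1 - ∫ ω, d i ω ∂μ := fun i => by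
      rw [integral_sub (integrable_const 1) (hinf i), integral_const, probReal_univ, one_smul]
    have := integral_mono (integrable_finsetSum _ fun i _ => hint i) (hdim.mul_const _) hpointwise
    rwa [integral_finsetSum _ fun i _ => hint i, integral_mul_const, ← hr, sum_congr rfl
      fun i _ => hterm i, sum_sub_distrib, sum_const, card_univ, Fintype.card_fin,
      nsmul_one] at this
  have hNε : (N : ℝ) * ε = ∑ i, ∫ ω, d i ω ∂μ := by
    rcases eq_or_ne N 0 with rfl | hN
    · simp
    · rw [hε]; field_simp; rfl
  rw [ge_iff_le, div_le_iff₀ (by positivity)]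
  linarith

/-- **Dimension lower bound (random subspace version; Theorem 1 of the paper).**
Let `φ 1, …, φ N` be unit-norm vectors in a real Hilbert space `H`, and let
`W : Ω → Submodule ℝ H` be a random finite-dimensional subspace (on a
probability space `(Ω, μ)`) such that `ω ↦ dim (W ω)` and each
`ω ↦ inf_{g ∈ W ω} ‖g - φ i‖²` are (measurable and) integrable.  With
`r = E[dim W]` and `ε = (1/N) ∑ i, E[inf_{g ∈ W} ‖g - φ i‖²]`, we have
`r ≥ N (1 - ε) / (1 + √(∑_{i ≠ j} ⟨φ i, φ j⟩²))`. -/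
theorem dimension_lower_bound_random
    {H : Type*} [NormedAddCommGroup H] [InnerProductSpace ℝ H] [CompleteSpace H]
    {Ω : Type*} [MeasurableSpace Ω] (μ : Measure Ω) [IsProbabilityMeasure μ]
    (N : ℕ) (φ : Fin N → H) (hφ : ∀ i, ‖φ i‖ ^ 2 = 1)
    (W : Ω → Submodule ℝ H) (hWfin : ∀ ω, FiniteDimensional ℝ (W ω))
    (hdim : Integrable (fun ω => (Module.finrank ℝ (W ω) : ℝ)) μ)
    (hinf : ∀ i, Integrable (fun ω => ⨅ g : W ω, ‖(g : H) - φ i‖ ^ 2) μ)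
    (r : ℝ) (hr : r = ∫ ω, (Module.finrank ℝ (W ω) : ℝ) ∂μ)
    (ε : ℝ)
    (hε : ε = (1 / (N : ℝ)) * ∑ i, ∫ ω, (⨅ g : W ω, ‖(g : H) - φ i‖ ^ 2) ∂μ) :
    r ≥ (N : ℝ) * (1 - ε) /
      (1 + Real.sqrt (∑ p ∈ (univ : Finset (Fin N × Fin N)).filter (fun p => p.1 ≠ p.2),
        ⟪φ p.1, φ p.2⟫ ^ 2)) :=
  dimension_lower_bound_random_general μ N φ hφ W hWfin hdim hinf r hr ε hε
end

section
/- Let P be the uniform probability distribution on the discrete hypercube {−1, 1}^d, and for each subset S ⊆ {1, …, d} with |S| = k let χ_S : {−1, 1}^d → ℝ be the parity function χ_S(x) = ∏_{j ∈ S} x_j. Let W be a finite-dimensional subspace of L²(P) such that (1/C(d,k)) · Σ_{S : |S| = k} inf_{g ∈ W} ‖g − χ_S‖²_{L²(P)} ≤ ε, where C(d,k) is the binomial coefficient d-choose-k. Then dim(W) ≥ (1 − ε) · C(d,k). -/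
/-!
The `k`-sparse parities are orthonormal in `L²(P)`. Writing `π` for the orthogonal projection
onto `W`, Pythagoras gives `inf_{g ∈ W} ‖g - χ_S‖² = 1 - ‖π χ_S‖²`, and expanding `π` in an
orthonormal basis `(b_i)` of `W` and applying Bessel's inequality to each `b_i` gives
`∑_S ‖π χ_S‖² = ∑_i ∑_S ⟪b_i, χ_S⟫² ≤ dim W`. Hence `C(d,k) - dim W ≤ ε C(d,k)`.
-/

open Finset MeasureTheory
open scoped InnerProductSpace

/-- The sign group `ℤˣ = {1, -1}` models the two-point set `{-1, 1}`. -/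
noncomputable instance : MeasurableSpace ℤˣ := ⊤

instance : MeasurableSingletonClass ℤˣ := ⟨fun _ => MeasurableSpace.measurableSet_top⟩

namespace Submodule

variable {𝕜 E : Type*} [RCLike 𝕜] [NormedAddCommGroup E] [InnerProductSpace 𝕜 E]

theorem norm_sq_sub_norm_sq_starProjection_le (K : Submodule 𝕜 E) [K.HasOrthogonalProjection]
    (v : E) (g : K) : ‖v‖ ^ 2 - ‖K.starProjection v‖ ^ 2 ≤ ‖(g : E) - v‖ ^ 2 := by
  have hperp : Kᗮ.starProjection v = v - K.starProjection v := by
    rw [starProjection_orthogonal']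
    rfl
  have hpyth := K.norm_sq_eq_add_norm_sq_starProjection v
  rw [hperp] at hpyth
  have hmin : ‖v - K.starProjection v‖ ≤ ‖v - g‖ :=
    K.starProjection_minimal v ▸ ciInf_le ⟨0, Set.forall_mem_range.2 fun _ => norm_nonneg _⟩ g
  rw [norm_sub_rev (g : E)]
  nlinarith [norm_nonneg (v - K.starProjection v)]

end Submodule

theorem OrthonormalBasis.norm_sq_starProjection_eq_sum {ι 𝕜 E : Type*} [Fintype ι] [RCLike 𝕜]
    [NormedAddCommGroup E] [InnerProductSpace 𝕜 E] {K : Submodule 𝕜 E}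
    [K.HasOrthogonalProjection] (b : OrthonormalBasis ι 𝕜 K) (v : E) :
    ‖K.starProjection v‖ ^ 2 = ∑ i, ‖⟪(b i : E), v⟫_𝕜‖ ^ 2 := by
  simp_rw [K.starProjection_apply, Submodule.norm_coe, ← b.sum_sq_norm_inner_right,
    Submodule.inner_orthogonalProjectionOnto_eq_of_mem_left]

namespace Orthonormal

variable {ι 𝕜 E : Type*} [RCLike 𝕜] [NormedAddCommGroup E] [InnerProductSpace 𝕜 E]
  {v : ι → E}

theorem sum_norm_sq_starProjection_le_finrank (hv : Orthonormal 𝕜 v) (s : Finset ι)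
    (K : Submodule 𝕜 E) [FiniteDimensional 𝕜 K] :
    ∑ i ∈ s, ‖K.starProjection (v i)‖ ^ 2 ≤ Module.finrank 𝕜 K := by
  let b := stdOrthonormalBasis 𝕜 K
  have hbessel (j) : ∑ i ∈ s, ‖⟪(b j : E), v i⟫_𝕜‖ ^ 2 ≤ 1 := by
    simpa only [norm_inner_symm, Submodule.norm_coe, b.orthonormal.1 j, one_pow] using
      hv.sum_inner_products_le (s := s) (b j : E)
  calc ∑ i ∈ s, ‖K.starProjection (v i)‖ ^ 2
      = ∑ j, ∑ i ∈ s, ‖⟪(b j : E), v i⟫_𝕜‖ ^ 2 := by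
        simp_rw [b.norm_sq_starProjection_eq_sum]
        exact sum_comm
    _ ≤ ∑ _j : Fin (Module.finrank 𝕜 K), (1 : ℝ) := sum_le_sum fun j _ => hbessel j
    _ = Module.finrank 𝕜 K := by simp

theorem card_sub_finrank_le_sum_iInf_norm_sub_sq [Fintype ι] (hv : Orthonormal 𝕜 v)
    (K : Submodule 𝕜 E) [FiniteDimensional 𝕜 K] :
    (Fintype.card ι : ℝ) - Module.finrank 𝕜 K ≤ ∑ i, ⨅ g : K, ‖(g : E) - v i‖ ^ 2 :=
  calc (Fintype.card ι : ℝ) - Module.finrank 𝕜 K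
      ≤ ∑ i, (‖v i‖ ^ 2 - ‖K.starProjection (v i)‖ ^ 2) := by
        simp only [sum_sub_distrib, hv.1, one_pow, sum_const, card_univ, nsmul_eq_mul, mul_one]
        linarith [hv.sum_norm_sq_starProjection_le_finrank univ K]
    _ ≤ ∑ i, ⨅ g : K, ‖(g : E) - v i‖ ^ 2 :=
        sum_le_sum fun i _ => le_ciInf (K.norm_sq_sub_norm_sq_starProjection_le (v i))

end Orthonormal

theorem L2.inner_eq_sum_of_ae_eq_uniformOfFintype {Ω : Type*} [Fintype Ω] [Nonempty Ω]
    [MeasurableSpace Ω] [MeasurableSingletonClass Ω]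
    {f g : Lp ℝ 2 (PMF.uniformOfFintype Ω).toMeasure} {F G : Ω → ℝ}
    (hf : f =ᵐ[(PMF.uniformOfFintype Ω).toMeasure] F)
    (hg : g =ᵐ[(PMF.uniformOfFintype Ω).toMeasure] G) :
    ⟪f, g⟫_ℝ = (Fintype.card Ω : ℝ)⁻¹ * ∑ x, F x * G x := by
  have hfg : (fun x => ⟪f x, g x⟫_ℝ) =ᵐ[(PMF.uniformOfFintype Ω).toMeasure]
      fun x => F x * G x := by
    filter_upwards [hf, hg] with x hfx hgx
    rw [hfx, hgx, real_inner_eq_re_inner, RCLike.inner_apply, conj_trivial, mul_comm]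
    rfl
  rw [L2.inner_def, integral_congr_ae hfg, PMF.integral_eq_sum, mul_sum]
  simp [PMF.uniformOfFintype_apply]

def parity {ι : Type*} (S : Finset ι) (x : ι → ℤˣ) : ℝ := ∏ j ∈ S, ((x j : ℤ) : ℝ)

section Parity

variable {ι : Type*} [Fintype ι] [DecidableEq ι]

theorem sum_parity_mul_parity (S T : Finset ι) :
    ∑ x, parity S x * parity T x = if S = T then 2 ^ Fintype.card ι else 0 := by
  have hcoord (j : ι) : ∑ v : ℤˣ, (if j ∈ S then ((v : ℤ) : ℝ) else 1) *
      (if j ∈ T then ((v : ℤ) : ℝ) else 1) = if (j ∈ S ↔ j ∈ T) then 2 else 0 := by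
    rw [show (univ : Finset ℤˣ) = {1, -1} from rfl, sum_pair (by decide)]
    by_cases hS : j ∈ S <;> by_cases hT : j ∈ T <;> norm_num [hS, hT]
  calc ∑ x, parity S x * parity T x
      = ∑ x : ι → ℤˣ, ∏ j, (if j ∈ S then ((x j : ℤ) : ℝ) else 1) *
          (if j ∈ T then ((x j : ℤ) : ℝ) else 1) := by
        simp only [parity, prod_mul_distrib, prod_ite_mem, univ_inter]
    _ = ∏ j, if (j ∈ S ↔ j ∈ T) then (2 : ℝ) else 0 := by
        rw [← Fintype.prod_congr _ _ hcoord, Fintype.prod_sum]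
    _ = if S = T then 2 ^ Fintype.card ι else 0 := by
        simp [Fintype.prod_ite_zero, ← Finset.ext_iff]

theorem orthonormal_parity {P : Measure (ι → ℤˣ)}
    (hP : P = (PMF.uniformOfFintype (ι → ℤˣ)).toMeasure) {𝒮 : Finset (Finset ι)}
    {χ : Finset ι → Lp ℝ 2 P} (hχ : ∀ S ∈ 𝒮, χ S =ᵐ[P] parity S) :
    Orthonormal ℝ (fun S : 𝒮 => χ S) := by
  subst hP
  rw [orthonormal_iff_ite]
  rintro ⟨S, hS⟩ ⟨T, hT⟩
  rw [L2.inner_eq_sum_of_ae_eq_uniformOfFintype (hχ S hS) (hχ T hT), sum_parity_mul_parity]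
  simp [Subtype.ext_iff]

end Parity

/-- **Lower bound for linear methods approximating `k`-sparse parity functions.**
Let `P` be the uniform probability distribution on the hypercube `{-1,1}^d`
(modeled as `Fin d → ℤˣ`), and for `S ⊆ {1,…,d}` with `|S| = k` let
`χ S ∈ L²(P)` be the parity function `x ↦ ∏_{j ∈ S} x j`.  If `W` is a
finite-dimensional subspace of `L²(P)` with
`(1/C(d,k)) ∑_{|S| = k} inf_{g ∈ W} ‖g - χ S‖² ≤ ε`, then
`dim W ≥ (1 - ε) C(d,k)`. -/
theorem sparse_parity_dimension_lower_bound
    (d k : ℕ) (P : Measure (Fin d → ℤˣ))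
    (hP : P = (PMF.uniformOfFintype (Fin d → ℤˣ)).toMeasure)
    (χ : Finset (Fin d) → Lp ℝ 2 P)
    (hχ : ∀ S ∈ Finset.powersetCard k (univ : Finset (Fin d)),
      (χ S : (Fin d → ℤˣ) → ℝ) =ᵐ[P] fun x => ∏ j ∈ S, ((x j : ℤ) : ℝ))
    (W : Submodule ℝ (Lp ℝ 2 P)) [FiniteDimensional ℝ W]
    (ε : ℝ)
    (hε : (1 / (Nat.choose d k : ℝ)) *
        ∑ S ∈ Finset.powersetCard k (univ : Finset (Fin d)),
          ⨅ g : W, ‖(g : Lp ℝ 2 P) - χ S‖ ^ 2 ≤ ε) :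
    (Module.finrank ℝ W : ℝ) ≥ (1 - ε) * (Nat.choose d k : ℝ) := by
  set 𝒮 := powersetCard k (univ : Finset (Fin d))
  have hcard : Fintype.card 𝒮 = d.choose k := by simp [𝒮]
  have hbound : (d.choose k : ℝ) - Module.finrank ℝ W ≤
      ∑ S ∈ 𝒮, ⨅ g : W, ‖(g : Lp ℝ 2 P) - χ S‖ ^ 2 := by
    rw [← hcard, ← sum_coe_sort]
    exact (orthonormal_parity hP hχ).card_sub_finrank_le_sum_iInf_norm_sub_sq W
  rcases (Nat.cast_nonneg (α := ℝ) (d.choose k)).eq_or_lt with hzero | hpos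
  · rw [← hzero, mul_zero]
    positivity
  · rw [one_div, inv_mul_le_iff₀ hpos] at hε
    linarith
end
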